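/- arXiv:1906.02141 — 6 statements merged into one kernel-verified Lean document; each statement's English description precedes it below -/
import Mathlib

section
/- If s and c are holomorphic on a connected open neighbourhood of 0, satisfy s' = c^5, c' = -s^5 with s(0)=0, c(0)=1, and γ = e^{iπ/3}, then whenever z and γz both lie in the domain, s(γz) = γ·s(z) and c(γz) = c(z). -/
/-!
If `γ ^ (n + 1) = 1`, the rotated pair `z ↦ γ⁻¹ s (γ z)`, `z ↦ c (γ z)` solves the same system
`s' = c ^ m`, `c' = -s ^ n` with the same initial values: the factor `γ` from the chain rule
cancels `γ⁻¹` in the first equation, and combines with `γ ^ n` to `γ ^ (n + 1) = 1` in the second.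
Uniqueness of the solution then identifies the rotated pair with `(s, c)`.
-/

open Complex Set

section Rotation

variable {U : Set ℂ} {s c : ℂ → ℂ} {γ : ℂ} {m n : ℕ}

theorem HasDerivAt.comp_const_mul {f : ℂ → ℂ} {f' z : ℂ} (hf : HasDerivAt f f' (γ * z)) :
    HasDerivAt (fun w => f (γ * w)) (f' * γ) z :=
  hf.comp z (by simpa using hasDerivAt_const_mul γ)

theorem HasDerivAt.inv_mul_comp_const_mul {f : ℂ → ℂ} {f' z : ℂ} (hγ : γ ≠ 0)
    (hf : HasDerivAt f f' (γ * z)) : HasDerivAt (fun w => γ⁻¹ * f (γ * w)) f' z := by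
  simpa [mul_comm, hγ] using hf.comp_const_mul.const_mul γ⁻¹

theorem hasDerivAt_rotate_fst (hγ : γ ≠ 0) (hU : MapsTo (γ * ·) U U)
    (hs : ∀ z ∈ U, HasDerivAt s (c z ^ m) z) :
    ∀ z ∈ U, HasDerivAt (fun w => γ⁻¹ * s (γ * w)) (c (γ * z) ^ m) z :=
  fun _ hz => (hs _ (hU hz)).inv_mul_comp_const_mul hγ

theorem hasDerivAt_rotate_snd (hγ : γ ^ (n + 1) = 1) (hU : MapsTo (γ * ·) U U)
    (hc : ∀ z ∈ U, HasDerivAt c (-(s z ^ n)) z) :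
    ∀ z ∈ U, HasDerivAt (fun w => c (γ * w)) (-((γ⁻¹ * s (γ * z)) ^ n)) z := by
  have hγn : γ⁻¹ ^ n = γ := by
    rw [inv_pow, ← eq_inv_of_mul_eq_one_left ((pow_succ' γ n).symm.trans hγ)]
  intro z hz
  convert (hc _ (hU hz)).comp_const_mul using 1
  rw [mul_pow, hγn]
  ring

end Rotation

theorem mapsTo_const_mul_ball {γ : ℂ} (hγ : ‖γ‖ ≤ 1) (r : ℝ) :
    MapsTo (γ * ·) (Metric.ball (0 : ℂ) r) (Metric.ball 0 r) := by
  intro z hz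
  simp only [Metric.mem_ball, dist_zero_right, norm_mul] at hz ⊢
  exact lt_of_le_of_lt (mul_le_of_le_one_left (norm_nonneg z) hγ) hz

theorem exp_pi_mul_I_div_three_pow_six : exp (Real.pi * I / 3) ^ 6 = 1 := by
  rw [← exp_nat_mul, ← exp_two_pi_mul_I]
  push_cast
  ring_nf

theorem stmt_1_general (r : ℝ) (s c : ℂ → ℂ)
    (hs : ∀ z ∈ Metric.ball (0 : ℂ) r, HasDerivAt s (c z ^ 5) z)
    (hc : ∀ z ∈ Metric.ball (0 : ℂ) r, HasDerivAt c (-(s z ^ 5)) z)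
    (hs0 : s 0 = 0) (hc0 : c 0 = 1)
    (huniq : ∀ S C : ℂ → ℂ,
      (∀ z ∈ Metric.ball (0 : ℂ) r, HasDerivAt S (C z ^ 5) z) →
      (∀ z ∈ Metric.ball (0 : ℂ) r, HasDerivAt C (-(S z ^ 5)) z) →
      S 0 = 0 → C 0 = 1 →
      ∀ z ∈ Metric.ball (0 : ℂ) r, S z = s z ∧ C z = c z) :
    ∀ z : ℂ, z ∈ Metric.ball (0 : ℂ) r →
      Complex.exp (Real.pi * Complex.I / 3) * z ∈ Metric.ball (0 : ℂ) r →
      s (Complex.exp (Real.pi * Complex.I / 3) * z)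
          = Complex.exp (Real.pi * Complex.I / 3) * s z ∧
      c (Complex.exp (Real.pi * Complex.I / 3) * z) = c z := by
  intro z hz _
  set γ := exp (Real.pi * I / 3)
  have hγ6 : γ ^ 6 = 1 := exp_pi_mul_I_div_three_pow_six
  have hγ0 : γ ≠ 0 := exp_ne_zero _
  have hU := mapsTo_const_mul_ball (norm_eq_one_of_pow_eq_one hγ6 (by norm_num)).le r
  obtain ⟨hsz, hcz⟩ := huniq _ _ (hasDerivAt_rotate_fst hγ0 hU hs) (hasDerivAt_rotate_snd hγ6 hU hc)
    (by simp [hs0]) (by simp [hc0]) z hz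
  refine ⟨?_, hcz⟩
  rw [← hsz, mul_inv_cancel_left₀ hγ0]

theorem stmt_1 (r : ℝ) (hr : 0 < r) (s c : ℂ → ℂ)
    (hs : ∀ z ∈ Metric.ball (0 : ℂ) r, HasDerivAt s (c z ^ 5) z)
    (hc : ∀ z ∈ Metric.ball (0 : ℂ) r, HasDerivAt c (-(s z ^ 5)) z)
    (hs0 : s 0 = 0) (hc0 : c 0 = 1)
    (huniq : ∀ S C : ℂ → ℂ,
      (∀ z ∈ Metric.ball (0 : ℂ) r, HasDerivAt S (C z ^ 5) z) →
      (∀ z ∈ Metric.ball (0 : ℂ) r, HasDerivAt C (-(S z ^ 5)) z) →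
      S 0 = 0 → C 0 = 1 →
      ∀ z ∈ Metric.ball (0 : ℂ) r, S z = s z ∧ C z = c z) :
    ∀ z : ℂ, z ∈ Metric.ball (0 : ℂ) r →
      Complex.exp (Real.pi * Complex.I / 3) * z ∈ Metric.ball (0 : ℂ) r →
      s (Complex.exp (Real.pi * Complex.I / 3) * z)
          = Complex.exp (Real.pi * Complex.I / 3) * s z ∧
      c (Complex.exp (Real.pi * Complex.I / 3) * z) = c z :=
  stmt_1_general r s c hs hc hs0 hc0 huniq
end

section
/- If s and c are holomorphic on a disc B centred at 0 on which the IVP s'=c^5, c'=-s^5, s(0)=0, c(0)=1 has a unique solution, then s(conj z) = conj(s(z)) and c(conj z) = conj(c(z)) for all z in B (assuming B is symmetric under conjugation). -/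
open Complex ComplexConjugate

lemma hasDerivAt_conj_comp_conj_of_forall {U : Set ℂ} (hU : ∀ z ∈ U, conj z ∈ U)
    {f f' : ℂ → ℂ} (hf : ∀ z ∈ U, HasDerivAt f (f' z) z) :
    ∀ z ∈ U, HasDerivAt (conj ∘ f ∘ conj) (conj (f' (conj z))) z := fun z hz ↦
  hasDerivAt_conj_conj_iff.mpr (by simpa using hf _ (hU z hz))

theorem stmt_2_general (r : ℝ) (s c : ℂ → ℂ)
    (hs : ∀ z ∈ Metric.ball (0 : ℂ) r, HasDerivAt s (c z ^ 5) z)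
    (hc : ∀ z ∈ Metric.ball (0 : ℂ) r, HasDerivAt c (-(s z ^ 5)) z)
    (hs0 : s 0 = 0) (hc0 : c 0 = 1)
    (huniq : ∀ S C : ℂ → ℂ,
      (∀ z ∈ Metric.ball (0 : ℂ) r, HasDerivAt S (C z ^ 5) z) →
      (∀ z ∈ Metric.ball (0 : ℂ) r, HasDerivAt C (-(S z ^ 5)) z) →
      S 0 = 0 → C 0 = 1 →
      ∀ z ∈ Metric.ball (0 : ℂ) r, S z = s z ∧ C z = c z) :
    ∀ z ∈ Metric.ball (0 : ℂ) r,
      s (starRingEnd ℂ z) = starRingEnd ℂ (s z) ∧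
      c (starRingEnd ℂ z) = starRingEnd ℂ (c z) := by
  have hball : ∀ z ∈ Metric.ball (0 : ℂ) r, conj z ∈ Metric.ball (0 : ℂ) r := by simp
  -- The reflected pair `conj ∘ s ∘ conj`, `conj ∘ c ∘ conj` solves the same IVP.
  have hS := hasDerivAt_conj_comp_conj_of_forall hball hs
  have hC := hasDerivAt_conj_comp_conj_of_forall hball hc
  simp only [map_pow, map_neg] at hS hC
  intro z hz
  obtain ⟨hs_conj, hc_conj⟩ := huniq (conj ∘ s ∘ conj) (conj ∘ c ∘ conj) hS hC
    (by simp [hs0]) (by simp [hc0]) (conj z) (hball z hz)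
  simp only [Function.comp_apply, conj_conj] at hs_conj hc_conj
  exact ⟨hs_conj.symm, hc_conj.symm⟩

theorem stmt_2 (r : ℝ) (hr : 0 < r) (s c : ℂ → ℂ)
    (hs : ∀ z ∈ Metric.ball (0 : ℂ) r, HasDerivAt s (c z ^ 5) z)
    (hc : ∀ z ∈ Metric.ball (0 : ℂ) r, HasDerivAt c (-(s z ^ 5)) z)
    (hs0 : s 0 = 0) (hc0 : c 0 = 1)
    (huniq : ∀ S C : ℂ → ℂ,
      (∀ z ∈ Metric.ball (0 : ℂ) r, HasDerivAt S (C z ^ 5) z) →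
      (∀ z ∈ Metric.ball (0 : ℂ) r, HasDerivAt C (-(S z ^ 5)) z) →
      S 0 = 0 → C 0 = 1 →
      ∀ z ∈ Metric.ball (0 : ℂ) r, S z = s z ∧ C z = c z) :
    ∀ z ∈ Metric.ball (0 : ℂ) r,
      s (starRingEnd ℂ z) = starRingEnd ℂ (s z) ∧
      c (starRingEnd ℂ z) = starRingEnd ℂ (c z) :=
  stmt_2_general r s c hs hc hs0 hc0 huniq
end

section
/- If s and c solve s'=c^5, c'=-s^5, s(0)=0, c(0)=1 on a connected open neighbourhood of 0, then q = s^2·c^2 satisfies the differential equation (q')^2 = 4·q·(1 - 4·q^3). -/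
/-!
The quantity `s ^ 6 + c ^ 6` has derivative `6 s⁵ c⁵ - 6 c⁵ s⁵ = 0`, so it is constant on the
connected set `U`, equal to its value `1` at `0`. Then `q' = 2 s c (c⁶ - s⁶)` and
`(c⁶ - s⁶)² = (c⁶ + s⁶)² - 4 s⁶ c⁶ = 1 - 4 q³`.
-/

open Complex

section ConservedQuantity

variable {𝕜 : Type*} [RCLike 𝕜] {s c : 𝕜 → 𝕜} {n : ℕ}

theorem hasDerivAt_pow_succ_add_pow_succ_eq_zero {z : 𝕜}
    (hs : HasDerivAt s (c z ^ n) z) (hc : HasDerivAt c (-(s z ^ n)) z) :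
    HasDerivAt (fun w => s w ^ (n + 1) + c w ^ (n + 1)) 0 z :=
  ((hs.fun_pow (n + 1)).add (hc.fun_pow (n + 1))).congr_deriv (by push_cast; ring)

theorem pow_succ_add_pow_succ_eq_of_isPreconnected {U : Set 𝕜} (hU : IsOpen U)
    (hconn : IsPreconnected U) (hs : ∀ z ∈ U, HasDerivAt s (c z ^ n) z)
    (hc : ∀ z ∈ U, HasDerivAt c (-(s z ^ n)) z) {z₀ z : 𝕜} (hz₀ : z₀ ∈ U) (hz : z ∈ U) :
    s z ^ (n + 1) + c z ^ (n + 1) = s z₀ ^ (n + 1) + c z₀ ^ (n + 1) :=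
  have hderiv := fun w hw => hasDerivAt_pow_succ_add_pow_succ_eq_zero (hs w hw) (hc w hw)
  hU.is_const_of_deriv_eq_zero hconn
    (fun w hw => (hderiv w hw).differentiableAt.differentiableWithinAt)
    (fun w hw => (hderiv w hw).deriv) hz hz₀

end ConservedQuantity

theorem stmt_5 (U : Set ℂ) (hU : IsOpen U) (hconn : IsPreconnected U)
    (h0 : (0 : ℂ) ∈ U) (s c : ℂ → ℂ)
    (hs : ∀ z ∈ U, HasDerivAt s (c z ^ 5) z)
    (hc : ∀ z ∈ U, HasDerivAt c (-(s z ^ 5)) z)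
    (hs0 : s 0 = 0) (hc0 : c 0 = 1)
    (q : ℂ → ℂ) (hq : q = fun z => s z ^ 2 * c z ^ 2) :
    ∀ z ∈ U, (deriv q z) ^ 2 = 4 * q z * (1 - 4 * q z ^ 3) := by
  intro z hz
  have hsum : s z ^ 6 + c z ^ 6 = 1 := by
    simpa [hs0, hc0] using pow_succ_add_pow_succ_eq_of_isPreconnected hU hconn hs hc h0 hz
  have hq' : HasDerivAt q (2 * s z * c z * (c z ^ 6 - s z ^ 6)) z := by
    subst hq
    exact (((hs z hz).fun_pow 2).fun_mul ((hc z hz).fun_pow 2)).congr_deriv (by push_cast; ring)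
  rw [hq'.deriv, hq]
  linear_combination 4 * s z ^ 2 * c z ^ 2 * (s z ^ 6 + c z ^ 6 + 1) * hsum
end

section
/- Suppose s and c are meromorphic functions on a connected open set extending the solution of s'=c^5, c'=-s^5, s(0)=0, c(0)=1, and suppose z₀ is a pole of s of order m and of c of order n. Then m + 1 = 5n and n + 1 = 5m, which forces m = n = 1/4, a contradiction; hence s and c cannot have poles, i.e., any meromorphic extension of s or c is holomorphic. -/
/-!
Near a pole of order `m`, differentiation raises the pole order by one, while a fifth power
multiplies it by five. Comparing orders in `s' = c ^ 5` and `c' = (-s) ^ 5` gives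
`m + 1 = 5 n` and `n + 1 = 5 m`, which has no solution in positive integers.
-/

open Filter
open scoped Topology

variable {𝕜 : Type*} [NontriviallyNormedField 𝕜]

theorem meromorphicOrderAt_eq_neg_of_eventuallyEq_div_pow {f a : 𝕜 → 𝕜} {x : 𝕜} {m : ℕ}
    (ha : AnalyticAt 𝕜 a x) (ha0 : a x ≠ 0)
    (hfa : f =ᶠ[𝓝[≠] x] fun z => a z / (z - x) ^ m) :
    meromorphicOrderAt f x = (-m : ℤ) := by
  have hmero : MeromorphicAt f x :=
    (ha.meromorphicAt.div (by fun_prop : MeromorphicAt (fun z => (z - x) ^ m) x)).congr hfa.symm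
  refine (meromorphicOrderAt_eq_int_iff hmero).2 ⟨a, ha, ha0, ?_⟩
  filter_upwards [hfa] with z hz
  rw [hz, zpow_neg, zpow_natCast, smul_eq_mul, div_eq_inv_mul]

theorem add_one_eq_mul_of_deriv_eventuallyEq_pow [CompleteSpace 𝕜] [CharZero 𝕜]
    {f g : 𝕜 → 𝕜} {x : 𝕜} {m n k : ℕ} (hm : m ≠ 0)
    (hf : meromorphicOrderAt f x = (-m : ℤ)) (hg : MeromorphicAt g x)
    (hg_ord : meromorphicOrderAt g x = (-n : ℤ)) (hfg : deriv f =ᶠ[𝓝[≠] x] g ^ k) :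
    m + 1 = k * n := by
  have hderiv := meromorphicOrderAt_deriv_eq_sub_one (by simpa using hm) hf
  rw [meromorphicOrderAt_congr hfg, meromorphicOrderAt_pow hg, hg_ord] at hderiv
  have hint : (k : ℤ) * -n = -m - 1 := by exact_mod_cast hderiv
  zify
  linarith

theorem stmt_7_general (s c : ℂ → ℂ) (z₀ : ℂ)
    (hs : ∀ᶠ z in nhdsWithin z₀ {z₀}ᶜ, HasDerivAt s (c z ^ 5) z)
    (hc : ∀ᶠ z in nhdsWithin z₀ {z₀}ᶜ, HasDerivAt c (-(s z ^ 5)) z)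
    (m n : ℕ) (hm : 0 < m) (hn : 0 < n)
    (a b : ℂ → ℂ) (ha : AnalyticAt ℂ a z₀) (hb : AnalyticAt ℂ b z₀)
    (ha0 : a z₀ ≠ 0) (hb0 : b z₀ ≠ 0)
    (hsa : ∀ᶠ z in nhdsWithin z₀ {z₀}ᶜ, s z = a z / (z - z₀) ^ m)
    (hcb : ∀ᶠ z in nhdsWithin z₀ {z₀}ᶜ, c z = b z / (z - z₀) ^ n) :
    False := by
  have hs_ord := meromorphicOrderAt_eq_neg_of_eventuallyEq_div_pow ha ha0 hsa
  have hc_ord := meromorphicOrderAt_eq_neg_of_eventuallyEq_div_pow hb hb0 hcb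
  have hns_ord : meromorphicOrderAt (-s) z₀ = (-m : ℤ) := meromorphicOrderAt_neg.symm.trans hs_ord
  have hns_mero : MeromorphicAt (-s) z₀ :=
    meromorphicAt_of_meromorphicOrderAt_ne_zero (by simp [hns_ord, hm.ne'])
  have hc_mero : MeromorphicAt c z₀ :=
    meromorphicAt_of_meromorphicOrderAt_ne_zero (by simp [hc_ord, hn.ne'])
  have hs' : deriv s =ᶠ[𝓝[≠] z₀] c ^ 5 := hs.mono fun z hz => hz.deriv
  have hc' : deriv c =ᶠ[𝓝[≠] z₀] (-s) ^ 5 :=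
    hc.mono fun z hz => hz.deriv.trans (Odd.neg_pow (by decide) _).symm
  have h1 := add_one_eq_mul_of_deriv_eventuallyEq_pow hm.ne' hs_ord hc_mero hc_ord hs'
  have h2 := add_one_eq_mul_of_deriv_eventuallyEq_pow hn.ne' hc_ord hns_mero hns_ord hc'
  omega

theorem stmt_7 (U : Set ℂ) (hU : IsOpen U) (hconn : IsPreconnected U)
    (h0 : (0 : ℂ) ∈ U) (s c : ℂ → ℂ)
    (hs0 : s 0 = 0) (hc0 : c 0 = 1)
    (z₀ : ℂ) (hz₀ : z₀ ∈ U)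
    (hs : ∀ᶠ z in nhdsWithin z₀ {z₀}ᶜ, HasDerivAt s (c z ^ 5) z)
    (hc : ∀ᶠ z in nhdsWithin z₀ {z₀}ᶜ, HasDerivAt c (-(s z ^ 5)) z)
    (m n : ℕ) (hm : 0 < m) (hn : 0 < n)
    (a b : ℂ → ℂ) (ha : AnalyticAt ℂ a z₀) (hb : AnalyticAt ℂ b z₀)
    (ha0 : a z₀ ≠ 0) (hb0 : b z₀ ≠ 0)
    (hsa : ∀ᶠ z in nhdsWithin z₀ {z₀}ᶜ, s z = a z / (z - z₀) ^ m)
    (hcb : ∀ᶠ z in nhdsWithin z₀ {z₀}ᶜ, c z = b z / (z - z₀) ^ n) :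
    False :=
  stmt_7_general s c z₀ hs hc m n hm hn a b ha hb ha0 hb0 hsa hcb
end

section
/- If s and c solve the IVP s'=c^5, c'=-s^5, s(0)=0, c(0)=1 near 0, and ℘ is meromorphic on ℂ with (℘')^2 = 4℘^3 - 16 extending 1/(s^2c^2), then S = s^{12} satisfies (S + ℘^{-3})^2 = S near 0; equivalently S^2 + (2℘^{-3} - 1)S + ℘^{-6} = 0. -/
/-!
Put `q = (s²c²)⁻¹`. The system `s' = c⁵`, `c' = -s⁵` gives `q' = 2(s⁶ - c⁶)/(s³c³)`, so
`q'² = 4q³(s⁶ - c⁶)²` while `4q³ - 16 = 4q³(1 - 4s⁶c⁶)`. Hence the equation `(℘')² = 4℘³ - 16`,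
read at a point where `s c ≠ 0`, says exactly `(s⁶ + c⁶)² = 1`, and then
`S + ℘⁻³ = s⁶(s⁶ + c⁶)` squares to `S`. Because `1/0 = 0`, the identity `℘⁻¹ = s²c²` holds at
every point, so where `s = 0` both sides vanish. Finally `c` cannot vanish where `s` does not: `℘` would have a pole there, so `℘' = 0` in Lean's convention, contradicting
`0 = 4·0³ - 16`.
-/

open Filter Topology

lemma not_continuousAt_inv_of_eq_zero {𝕜 : Type*} [NontriviallyNormedField 𝕜] {g : 𝕜 → 𝕜}
    {z : 𝕜} (hg : ContinuousAt g z) (hgz : g z = 0) (hne : ∀ᶠ w in 𝓝[≠] z, g w ≠ 0) :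
    ¬ ContinuousAt (fun w => (g w)⁻¹) z := by
  intro hinv
  have hlim : Tendsto (fun w => g w * (g w)⁻¹) (𝓝[≠] z) (𝓝 0) := by
    simpa [hgz] using (hg.tendsto.mul hinv.tendsto).mono_left nhdsWithin_le_nhds
  have hone : (fun w => g w * (g w)⁻¹) =ᶠ[𝓝[≠] z] fun _ => 1 :=
    hne.mono fun w hw => mul_inv_cancel₀ hw
  exact one_ne_zero (tendsto_nhds_unique (tendsto_const_nhds.congr' hone.symm) hlim)

section FermatSextic

variable {s c : ℂ → ℂ} {z : ℂ}

lemma hasDerivAt_inv_sq_mul_sq (hs : HasDerivAt s (c z ^ 5) z)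
    (hc : HasDerivAt c (-(s z ^ 5)) z) (hsz : s z ≠ 0) (hcz : c z ≠ 0) :
    HasDerivAt (fun w => (s w ^ 2 * c w ^ 2)⁻¹)
      (2 * (s z ^ 6 - c z ^ 6) / (s z ^ 3 * c z ^ 3)) z := by
  refine (((hs.pow 2).mul (hc.pow 2)).inv (by simp [hsz, hcz])).congr_deriv ?_
  simp only [Pi.pow_apply, Pi.mul_apply, Nat.cast_ofNat]
  field_simp
  ring

lemma ne_zero_of_weierstrass {P : ℂ → ℂ} (hs : HasDerivAt s (c z ^ 5) z)
    (hc : HasDerivAt c (-(s z ^ 5)) z) (hsz : s z ≠ 0)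
    (hP : P =ᶠ[𝓝 z] fun w => (s w ^ 2 * c w ^ 2)⁻¹)
    (hPde : deriv P z ^ 2 = 4 * P z ^ 3 - 16) : c z ≠ 0 := by
  intro hcz
  have hne : ∀ᶠ w in 𝓝[≠] z, s w ^ 2 * c w ^ 2 ≠ 0 := by
    filter_upwards [(hs.continuousAt.eventually_ne hsz).filter_mono nhdsWithin_le_nhds,
      hc.eventually_ne (by simpa using hsz)] with w hsw hcw
    exact mul_ne_zero (pow_ne_zero 2 hsw) (pow_ne_zero 2 (hcz ▸ hcw))
  have hdisc := not_continuousAt_inv_of_eq_zero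
    ((hs.continuousAt.pow 2).mul (hc.continuousAt.pow 2)) (by simp [hcz]) hne
  have hderiv : deriv P z = 0 :=
    deriv_zero_of_not_differentiableAt fun hd => hdisc (hd.continuousAt.congr hP)
  rw [hderiv, hP.eq_of_nhds, hcz] at hPde
  norm_num at hPde

lemma pow_six_add_pow_six_sq_eq_one_of_weierstrass {P : ℂ → ℂ}
    (hs : HasDerivAt s (c z ^ 5) z) (hc : HasDerivAt c (-(s z ^ 5)) z)
    (hsz : s z ≠ 0) (hcz : c z ≠ 0) (hP : P =ᶠ[𝓝 z] fun w => (s w ^ 2 * c w ^ 2)⁻¹)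
    (hPde : deriv P z ^ 2 = 4 * P z ^ 3 - 16) : (s z ^ 6 + c z ^ 6) ^ 2 = 1 := by
  rw [hP.deriv_eq, (hasDerivAt_inv_sq_mul_sq hs hc hsz hcz).deriv, hP.eq_of_nhds] at hPde
  field_simp at hPde
  linear_combination hPde / 4

end FermatSextic

theorem stmt_8_general (U : Set ℂ) (hU : IsOpen U) (s c : ℂ → ℂ)
    (hs : ∀ z ∈ U, HasDerivAt s (c z ^ 5) z)
    (hc : ∀ z ∈ U, HasDerivAt c (-(s z ^ 5)) z)
    (P : ℂ → ℂ)
    (hPde : ∀ z ∈ U \ {0}, (deriv P z) ^ 2 = 4 * P z ^ 3 - 16)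
    (hPq : ∀ z ∈ U \ {0}, P z = 1 / (s z ^ 2 * c z ^ 2)) :
    ∀ z ∈ U \ {0},
      (s z ^ 12 + (P z)⁻¹ ^ 3) ^ 2 = s z ^ 12 ∧
      (s z ^ 12) ^ 2 + (2 * (P z)⁻¹ ^ 3 - 1) * s z ^ 12 + (P z)⁻¹ ^ 6 = 0 := by
  intro z hz
  have hP : P =ᶠ[𝓝 z] fun w => (s w ^ 2 * c w ^ 2)⁻¹ :=
    eventually_of_mem ((hU.sdiff isClosed_singleton).mem_nhds hz) fun w hw => by
      rw [hPq w hw, one_div]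
  have hkey : s z ^ 12 * ((s z ^ 6 + c z ^ 6) ^ 2 - 1) = 0 := by
    by_cases hsz : s z = 0
    · simp [hsz]
    have hcz := ne_zero_of_weierstrass (hs z hz.1) (hc z hz.1) hsz hP (hPde z hz)
    rw [pow_six_add_pow_six_sq_eq_one_of_weierstrass (hs z hz.1) (hc z hz.1) hsz hcz hP
      (hPde z hz)]
    ring
  rw [hP.eq_of_nhds, inv_inv]
  constructor <;> linear_combination hkey

theorem stmt_8 (U : Set ℂ) (hU : IsOpen U) (h0 : (0 : ℂ) ∈ U) (s c : ℂ → ℂ)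
    (hs : ∀ z ∈ U, HasDerivAt s (c z ^ 5) z)
    (hc : ∀ z ∈ U, HasDerivAt c (-(s z ^ 5)) z)
    (hs0 : s 0 = 0) (hc0 : c 0 = 1)
    (P : ℂ → ℂ)
    (hPde : ∀ z ∈ U \ {0}, (deriv P z) ^ 2 = 4 * P z ^ 3 - 16)
    (hPq : ∀ z ∈ U \ {0}, P z = 1 / (s z ^ 2 * c z ^ 2)) :
    ∀ z ∈ U \ {0},
      (s z ^ 12 + (P z)⁻¹ ^ 3) ^ 2 = s z ^ 12 ∧
      (s z ^ 12) ^ 2 + (2 * (P z)⁻¹ ^ 3 - 1) * s z ^ 12 + (P z)⁻¹ ^ 6 = 0 :=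
  stmt_8_general U hU s c hs hc P hPde hPq
end

section
/- Let t be holomorphic on a connected open set U and satisfy (t')^3 = 1 + t^6 on U. If t' vanishes at some point of U, then t is constant on U. -/
/-!
Put `c = t z₀`; then `c⁶ = -1`, so `c` is a simple zero of `p w = 1 + w⁶`. If `t - c` had finite
order `n ≥ 1` at `z₀`, then `p ∘ t` would also vanish to order `n` there, while `(t')³` vanishes
to order `3 (n - 1)`; and `n = 3 (n - 1)` has no solution in `ℕ`. Hence `t` is constant near `z₀`,
and on all of `U` by the identity theorem.
-/

open Complex Filter Topology

lemma ENat.eq_top_of_nsmul_eq_add_one {k : ℕ} (hk : 3 ≤ k) {m : ℕ∞} (h : k • m = m + 1) :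
    m = ⊤ := by
  induction m with
  | top => rfl
  | coe m =>
    have : k * m = m + 1 := by
      rw [nsmul_eq_mul] at h
      exact_mod_cast h
    exfalso
    rcases m with _ | m
    · simp at this
    · nlinarith

lemma AnalyticAt.eventuallyEq_const_of_deriv_pow_eq_comp {𝕜 : Type*} [NontriviallyNormedField 𝕜]
    [CompleteSpace 𝕜] [CharZero 𝕜] {f p : 𝕜 → 𝕜} {x : 𝕜} {k : ℕ} (hk : 3 ≤ k)
    (hf : AnalyticAt 𝕜 f x) (hp : AnalyticAt 𝕜 p (f x)) (hp0 : p (f x) = 0)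
    (hp' : deriv p (f x) ≠ 0) (hode : deriv f ^ k =ᶠ[𝓝 x] p ∘ f) :
    f =ᶠ[𝓝 x] fun _ ↦ f x := by
  have hcomp : analyticOrderAt (p ∘ f) x = analyticOrderAt (f · - f x) x := by
    rw [hp.analyticOrderAt_comp hf, hp.analyticOrderAt_eq_one_of_zero_deriv_ne_zero hp0 hp',
      one_mul]
  have hpow : analyticOrderAt (deriv f ^ k) x = k • analyticOrderAt (deriv f) x :=
    analyticOrderAt_pow hf.deriv k
  rw [analyticOrderAt_congr hode, hcomp, ← hf.analyticOrderAt_deriv_add_one] at hpow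
  have htop : analyticOrderAt (f · - f x) x = ⊤ := by
    rw [← hf.analyticOrderAt_deriv_add_one, ENat.eq_top_of_nsmul_eq_add_one hk hpow.symm, top_add]
  filter_upwards [analyticOrderAt_eq_top.mp htop] with z hz
  exact sub_eq_zero.mp hz

theorem stmt_10 (U : Set ℂ) (hU : IsOpen U) (hconn : IsPreconnected U)
    (t : ℂ → ℂ) (ht : DifferentiableOn ℂ t U)
    (heq : ∀ z ∈ U, (deriv t z) ^ 3 = 1 + t z ^ 6)
    (z₀ : ℂ) (hz₀ : z₀ ∈ U) (hv : deriv t z₀ = 0) :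
    ∀ z ∈ U, t z = t z₀ := by
  have hta : AnalyticOnNhd ℂ t U := ht.analyticOnNhd hU
  have hroot : 1 + t z₀ ^ 6 = 0 := by simpa [hv] using (heq z₀ hz₀).symm
  have hsimple : deriv (fun w : ℂ ↦ 1 + w ^ 6) (t z₀) ≠ 0 := by
    have ht0 : t z₀ ≠ 0 := by rintro h; simp [h] at hroot
    simpa using ht0
  have hode : deriv t ^ 3 =ᶠ[𝓝 z₀] (fun w ↦ 1 + w ^ 6) ∘ t := by
    filter_upwards [hU.mem_nhds hz₀] with z hz
    exact heq z hz
  have hlocal := (hta z₀ hz₀).eventuallyEq_const_of_deriv_pow_eq_comp le_rfl (by fun_prop)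
    hroot hsimple hode
  exact fun z hz ↦ hta.eqOn_of_preconnected_of_eventuallyEq analyticOnNhd_const hconn hz₀ hlocal hz
end
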